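/- Let β be a constant-coefficient p-form on ℝ^{n+1} (1 ≤ p ≤ n). For a subset I = {i_0 < ⋯ < i_r} ⊆ {0,…,n}, define β'_r(I) = ((-1)^r / (p(p-1)⋯(p-r+1))) · Σ_{j=0}^r (-1)^j (C_{P^{i_0}} ∘ ⋯ ∘ Ĉ_{P^{i_j}} ∘ ⋯ ∘ C_{P^{i_r}})(β), where C_{P^i} is interior multiplication by the i-th standard basis vector. Then the cochain β'_r : {I ⊆ {0,…,n} : |I| = r+1} → Λ^{p-r}(ℝ^{n+1})* is closed under the Čech-type coboundary, i.e., for every I with |I| = r+2, Σ_{j=0}^{r+1} (-1)^j β'_r(I ∖ {i_j}) = 0. -/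

import Mathlib

/-!
Up to the scalar `(-1)^r / (p(p-1)⋯(p-r+1))`, `β'_r(I)` is the alternating sum over the faces
`I ∖ {i_k}` of the contraction of `β` along that face, i.e. `β'_r` is the coboundary of a
cochain. Closedness is therefore `δ ∘ δ = 0`: in the double alternating sum every removal of two
indices occurs twice, once in each order, with opposite signs.
-/

open scoped BigOperators

variable {V : Type*} [AddCommGroup V] [Module ℝ V]

/-- Iterated interior multiplication `C_{u_0} ∘ ⋯ ∘ C_{u_{r-1}}` (the rightmost contraction
applied first) on alternating forms. -/
noncomputable def iterContract : {r : ℕ} → (Fin r → V) → {q : ℕ} →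
    (V [⋀^Fin (q + r)]→ₗ[ℝ] ℝ) → (V [⋀^Fin q]→ₗ[ℝ] ℝ)
  | 0, _, _, β => β
  | r + 1, u, q, β => iterContract (fun i => u i.castSucc) (β.curryLeft (u (Fin.last r)))

/-- The cochain `β'_r` attached to a constant-coefficient `p`-form `β` on `ℝ^{n+1}`
(with `p = q + r`): for `I = {i_0 < ⋯ < i_r}`,
`β'_r(I) = ((-1)^r / (p(p-1)⋯(p-r+1))) ∑_j (-1)^j (C_{P^{i_0}} ∘ ⋯ ∘ Ĉ_{P^{i_j}} ∘ ⋯ ∘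
C_{P^{i_r}})(β)`. -/
noncomputable def betaCochain {n q r : ℕ}
    (β : (Fin (n + 1) → ℝ) [⋀^Fin (q + r)]→ₗ[ℝ] ℝ)
    (c : Fin (r + 1) → Fin (n + 1)) : (Fin (n + 1) → ℝ) [⋀^Fin q]→ₗ[ℝ] ℝ :=
  ((-1 : ℝ) ^ r / ((Nat.descFactorial (q + r) r : ℕ) : ℝ)) •
    ∑ j : Fin (r + 1), ((-1 : ℝ) ^ (j : ℕ)) •
      iterContract (fun i : Fin r => Pi.single (c (j.succAbove i)) (1 : ℝ)) β

open Finset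

namespace Fin

/-- Removing `i` and then `j` from `Fin (n + 2)` deletes the same two points as removing
`i.succAbove j` and then `j.predAbove i`. -/
def swapFace {n : ℕ} (p : Fin (n + 2) × Fin (n + 1)) : Fin (n + 2) × Fin (n + 1) :=
  (p.1.succAbove p.2, p.2.predAbove p.1)

lemma swapFace_involutive {n : ℕ} : Function.Involutive (swapFace (n := n)) := fun p =>
  Prod.ext (succAbove_succAbove_predAbove p.1 p.2) (predAbove_predAbove_succAbove p.1 p.2)

lemma succAbove_comp_swapFace {n : ℕ} (p : Fin (n + 2) × Fin (n + 1)) :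
    (swapFace p).1.succAbove ∘ (swapFace p).2.succAbove = p.1.succAbove ∘ p.2.succAbove :=
  funext (succAbove_succAbove_succAbove_predAbove p.1 p.2)

lemma neg_one_pow_swapFace {R : Type*} [Ring R] {n : ℕ} (p : Fin (n + 2) × Fin (n + 1)) :
    (-1 : R) ^ ((swapFace p).1 + (swapFace p).2 : ℕ) = -(-1) ^ (p.1 + p.2 : ℕ) := by
  obtain ⟨i, j⟩ := p
  rcases lt_or_ge j.castSucc i with h | h
  · have hval : (i : ℕ) + j = ((swapFace (i, j)).1 : ℕ) + (swapFace (i, j)).2 + 1 := by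
      simp only [swapFace, succAbove_of_castSucc_lt _ _ h, predAbove_of_castSucc_lt _ _ h,
        val_castSucc, val_pred]
      have : (j : ℕ) < i := h
      omega
    rw [hval, pow_succ, mul_neg_one, neg_neg]
  · have hval : ((swapFace (i, j)).1 : ℕ) + (swapFace (i, j)).2 = (i : ℕ) + j + 1 := by
      simp only [swapFace, succAbove_of_le_castSucc _ _ h, predAbove_of_le_castSucc _ _ h,
        val_succ, coe_castPred]
      omega
    rw [hval, pow_succ, mul_neg_one]

theorem sum_sum_neg_one_pow_smul_succAbove_comp_succAbove {R M : Type*} [Ring R]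
    [AddCommGroup M] [Module R M] {n : ℕ} (F : (Fin n → Fin (n + 2)) → M) :
    ∑ i : Fin (n + 2), ∑ j : Fin (n + 1),
      (-1 : R) ^ (i + j : ℕ) • F (i.succAbove ∘ j.succAbove) = 0 := by
  rw [← sum_product']
  refine sum_ninvolution swapFace (fun p => ?_) (fun p _ hfix => ?_) (fun _ => mem_univ _)
    swapFace_involutive
  · rw [succAbove_comp_swapFace, neg_one_pow_swapFace, neg_smul, add_neg_cancel]
  · exact succAbove_ne p.1 p.2 (congrArg Prod.fst hfix)

end Fin

theorem betaCochain_closed_general (n q r : ℕ)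
    (β : (Fin (n + 1) → ℝ) [⋀^Fin (q + r)]→ₗ[ℝ] ℝ)
    (c : Fin (r + 2) → Fin (n + 1)) :
    ∑ j : Fin (r + 2), ((-1 : ℝ) ^ (j : ℕ)) • betaCochain β (c ∘ j.succAbove) = 0 := by
  set s : ℝ := (-1) ^ r / ((q + r).descFactorial r : ℝ)
  let contractAlong (e : Fin r → Fin (r + 2)) : (Fin (n + 1) → ℝ) [⋀^Fin q]→ₗ[ℝ] ℝ :=
    iterContract (fun i => Pi.single (c (e i)) 1) β
  calc ∑ j : Fin (r + 2), ((-1 : ℝ) ^ (j : ℕ)) • betaCochain β (c ∘ j.succAbove)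
      = s • ∑ j : Fin (r + 2), ∑ k : Fin (r + 1),
          (-1 : ℝ) ^ (j + k : ℕ) • contractAlong (j.succAbove ∘ k.succAbove) := by
        simp only [betaCochain, smul_sum, smul_smul, pow_add]
        refine sum_congr rfl fun j _ => sum_congr rfl fun k _ => ?_
        congr 1
        ring
    _ = 0 := by
        rw [Fin.sum_sum_neg_one_pow_smul_succAbove_comp_succAbove contractAlong, smul_zero]

/-- The cochain `β'_r` is closed under the Čech-type coboundary: for every
`I = {i_0 < ⋯ < i_{r+1}} ⊆ {0, …, n}`, `∑_j (-1)^j β'_r(I ∖ {i_j}) = 0`. -/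
theorem betaCochain_closed (n q r : ℕ) (hp1 : 1 ≤ q + r) (hpn : q + r ≤ n)
    (β : (Fin (n + 1) → ℝ) [⋀^Fin (q + r)]→ₗ[ℝ] ℝ)
    (c : Fin (r + 2) → Fin (n + 1)) (hc : StrictMono c) :
    ∑ j : Fin (r + 2), ((-1 : ℝ) ^ (j : ℕ)) • betaCochain β (c ∘ j.succAbove) = 0 :=
  betaCochain_closed_general n q r β c
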